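/- Let Q'_k = {x ∈ ℝ^k : x_1 > 0, …, x_k > 0} be the open first quadrant in ℝ^k and let n ∈ ℤ. Then the function n·𝟏_{Q'_k} : ℝ^k → ℤ (equal to n on Q'_k and 0 elsewhere) is a sum of signs if and only if 2^k divides n. -/

import Mathlib

/-!
Sufficiency: `∏ᵢ (sgn xᵢ + sgn xᵢ²)` is `2 ^ k` on the open quadrant and `0` elsewhere, and
expanding the product writes it as a sum of `2 ^ k` signs of monomials.

Necessity, by induction on `k`: suppose `n • 𝟏_{Q'_{k+1}} = ∑ᵢ sgn gᵢ` off the zero set of a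
nonzero polynomial. Expand `gᵢ = x₀ ^ mᵢ * (hᵢ(x') + x₀ * ⋯)` in the first variable. For generic
`x'` and all small `t ≠ 0`, `sgn gᵢ(t, x') = sgn t ^ mᵢ * sgn hᵢ(x')`; adding the identities for
some `t > 0` (where the left side is `n • 𝟏_{Q'_k}(x')`) and some `t < 0` (where it is `0`) gives
`n • 𝟏_{Q'_k} = 2 * ∑_{mᵢ even} sgn hᵢ` generically. Evaluating at a generic point of `Q'_k`
shows `2 ∣ n`, and the induction hypothesis applies to `n / 2`.
-/

/-- The integer-valued sign of a real number. -/
noncomputable def sgn (r : ℝ) : ℤ := if r < 0 then -1 else if 0 < r then 1 else 0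

/-- A function `φ : ℝ^n → ℤ` is a sum of signs if it is a finite sum of signs of
polynomials. -/
def IsSumOfSigns {n : ℕ} (φ : (Fin n → ℝ) → ℤ) : Prop :=
  ∃ (s : ℕ) (g : Fin s → MvPolynomial (Fin n) ℝ),
    ∀ x, φ x = ∑ i : Fin s, sgn (MvPolynomial.eval x (g i))

open Polynomial Filter Topology

noncomputable def sgnHom : ℝ →*₀ ℤ := SignType.castHom.comp signHom

theorem sgnHom_apply (r : ℝ) : sgnHom r = sgn r := by
  rcases lt_trichotomy r 0 with h | rfl | h
  · simp [sgnHom, sgn, h, sign_neg]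
  · simp [sgnHom, sgn]
  · simp [sgnHom, sgn, h, h.not_gt, sign_pos]

@[simp] theorem sgn_zero : sgn 0 = 0 := by simp [sgn]

theorem sgn_of_pos {r : ℝ} (h : 0 < r) : sgn r = 1 := by simp [sgn, h, h.not_gt]

theorem sgn_of_neg {r : ℝ} (h : r < 0) : sgn r = -1 := by simp [sgn, h]

theorem sgn_eq_zero_iff {r : ℝ} : sgn r = 0 ↔ r = 0 := by
  unfold sgn; split_ifs <;> grind

theorem sgn_neg (a : ℝ) : sgn (-a) = -sgn a := by
  unfold sgn; split_ifs <;> grind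

theorem sgn_mul (a b : ℝ) : sgn (a * b) = sgn a * sgn b := by
  simp only [← sgnHom_apply, map_mul]

theorem sgn_pow (a : ℝ) (m : ℕ) : sgn (a ^ m) = sgn a ^ m := by
  simp only [← sgnHom_apply, map_pow]

theorem sgn_prod {ι : Type*} (s : Finset ι) (f : ι → ℝ) :
    sgn (∏ i ∈ s, f i) = ∏ i ∈ s, sgn (f i) := by
  simp only [← sgnHom_apply, map_prod]

theorem sgn_pow_two_add_sgn (a : ℝ) : sgn (a ^ 2) + sgn a = if 0 < a then 2 else 0 := by
  unfold sgn; split_ifs <;> nlinarith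

theorem Polynomial.eventually_sgn_eval_eq {p : ℝ[X]} {m : ℕ} (hm : p.coeff m ≠ 0)
    (hlow : ∀ d < m, p.coeff d = 0) :
    ∀ᶠ t in 𝓝 0, sgn (p.eval t) = sgn t ^ m * sgn (p.coeff m) := by
  obtain ⟨r, rfl⟩ : X ^ m ∣ p := X_pow_dvd_iff.2 hlow
  have hr : (X ^ m * r).coeff m = r.eval 0 := by
    rw [coeff_X_pow_mul', if_pos le_rfl, Nat.sub_self, coeff_zero_eq_eval_zero]
  rw [hr] at hm ⊢
  have hsign : ContinuousAt (fun t => SignType.sign (r.eval t)) 0 :=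
    (continuousAt_sign_of_ne_zero hm).comp (f := fun t => r.eval t) r.continuous.continuousAt
  filter_upwards [hsign.eventually_mem ((isOpen_discrete _).mem_nhds (Set.mem_singleton _))]
    with t ht
  rw [eval_mul, eval_pow, eval_X, sgn_mul, sgn_pow, ← sgnHom_apply (eval t r),
    ← sgnHom_apply (eval 0 r)]
  simp only [sgnHom, MonoidWithZeroHom.comp_apply, signHom_apply, Set.mem_singleton_iff.1 ht]

open MvPolynomial

theorem MvPolynomial.eventually_sgn_eval_cons_eq {k : ℕ} (f : MvPolynomial (Fin (k + 1)) ℝ)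
    (x : Fin k → ℝ) (hf : f ≠ 0 → eval x (finSuccEquiv ℝ k f).trailingCoeff ≠ 0) :
    ∀ᶠ t in 𝓝 0, sgn (eval (Fin.cons t x) f) =
      sgn t ^ (finSuccEquiv ℝ k f).natTrailingDegree *
        sgn (eval x (finSuccEquiv ℝ k f).trailingCoeff) := by
  rcases eq_or_ne f 0 with rfl | hf0
  · simp
  have hcoeff : ((finSuccEquiv ℝ k f).map (eval x)).coeff (finSuccEquiv ℝ k f).natTrailingDegree =
      eval x (finSuccEquiv ℝ k f).trailingCoeff := Polynomial.coeff_map ..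
  simp only [eval_eq_eval_mv_eval', ← hcoeff]
  refine Polynomial.eventually_sgn_eval_eq (hcoeff ▸ hf hf0) fun d hd => ?_
  rw [Polynomial.coeff_map, coeff_eq_zero_of_lt_natTrailingDegree hd, map_zero]

theorem MvPolynomial.exists_pos_eval_ne_zero {k : ℕ} {q : MvPolynomial (Fin k) ℝ} (hq : q ≠ 0) :
    ∃ x, (∀ i, 0 < x i) ∧ eval x q ≠ 0 := by
  by_contra! h
  exact hq <| funext_set (fun _ => Set.Ioi 0) (fun _ => Set.Ioi_infinite 0) fun x hx => by
    simpa using h x fun i => hx i trivial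

noncomputable def quadrantIndicator (k : ℕ) (n : ℤ) (x : Fin k → ℝ) : ℤ :=
  if ∀ i, 0 < x i then n else 0

theorem quadrantIndicator_cons (k : ℕ) (n : ℤ) (t : ℝ) (x : Fin k → ℝ) :
    quadrantIndicator (k + 1) n (Fin.cons t x) = if 0 < t then quadrantIndicator k n x else 0 := by
  simp only [quadrantIndicator, Fin.forall_fin_succ, Fin.cons_zero, Fin.cons_succ]
  split_ifs <;> tauto

theorem quadrantIndicator_mul (k : ℕ) (a b : ℤ) :
    quadrantIndicator k (a * b) = a • quadrantIndicator k b := by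
  ext x
  simp only [quadrantIndicator, Pi.smul_apply, smul_eq_mul, mul_ite, mul_zero]

theorem sum_add_sum_neg_one_pow_mul {ι : Type*} (s : Finset ι) (m : ι → ℕ) (a : ι → ℤ) :
    ∑ i ∈ s, a i + ∑ i ∈ s, (-1) ^ m i * a i = 2 * ∑ i ∈ s, if Even (m i) then a i else 0 := by
  rw [← Finset.sum_add_distrib, Finset.mul_sum]
  refine Finset.sum_congr rfl fun i _ => ?_
  rcases Nat.even_or_odd (m i) with h | h
  · rw [h.neg_one_pow, if_pos h]; ring
  · rw [h.neg_one_pow, if_neg (Nat.not_even_iff_odd.2 h)]; ring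

theorem quadrantIndicator_eq_two_mul_of_eventually_cons {ι : Type*} [Fintype ι] {k : ℕ} {n : ℤ}
    {x : Fin k → ℝ} {m : ι → ℕ} {a : ι → ℤ}
    (h : ∀ᶠ t in 𝓝 0, t ≠ 0 → quadrantIndicator (k + 1) n (Fin.cons t x) = ∑ i, sgn t ^ m i * a i) :
    quadrantIndicator k n x = 2 * ∑ i, if Even (m i) then a i else 0 := by
  obtain ⟨tp, htp, htp0⟩ :=
    ((h.filter_mono nhdsWithin_le_nhds).and (self_mem_nhdsWithin (s := Set.Ioi 0))).exists
  obtain ⟨tn, htn, htn0⟩ :=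
    ((h.filter_mono nhdsWithin_le_nhds).and (self_mem_nhdsWithin (s := Set.Iio 0))).exists
  have hpos := htp htp0.ne'
  have hneg := htn htn0.ne
  rw [quadrantIndicator_cons, if_pos htp0, sgn_of_pos htp0] at hpos
  rw [quadrantIndicator_cons, if_neg htn0.not_gt, sgn_of_neg htn0] at hneg
  simp only [one_pow, one_mul] at hpos
  rw [hpos, ← sum_add_sum_neg_one_pow_mul, ← hneg, add_zero]

theorem exists_quadrantIndicator_eq_two_mul_of_succ {ι : Type*} [Fintype ι] {k : ℕ} {n : ℤ}
    {g : ι → MvPolynomial (Fin (k + 1)) ℝ} {q : MvPolynomial (Fin (k + 1)) ℝ} (hq : q ≠ 0)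
    (hg : ∀ x, eval x q ≠ 0 → quadrantIndicator (k + 1) n x = ∑ i, sgn (eval x (g i))) :
    ∃ (h : ι → MvPolynomial (Fin k) ℝ) (q' : MvPolynomial (Fin k) ℝ), q' ≠ 0 ∧
      ∀ x, eval x q' ≠ 0 → quadrantIndicator k n x = 2 * ∑ i, sgn (eval x (h i)) := by
  classical
  set P := fun i => finSuccEquiv ℝ k (g i)
  set Q := finSuccEquiv ℝ k q
  have hQ : Q.trailingCoeff ≠ 0 := by simpa [Q] using hq
  -- `q'` is chosen so that, off its zero set, `q (t, x)` has no zero for small `t ≠ 0` and the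
  -- lowest coefficient in `x₀` of every nonzero `g i` does not vanish.
  refine ⟨fun i => if Even (P i).natTrailingDegree then (P i).trailingCoeff else 0,
    Q.trailingCoeff * ∏ i ∈ Finset.univ.filter (g · ≠ 0), (P i).trailingCoeff,
    mul_ne_zero hQ (Finset.prod_ne_zero_iff.2 fun i hi => by
      simpa [P] using (Finset.mem_filter.1 hi).2),
    fun x hx => ?_⟩
  rw [map_mul, map_prod] at hx
  have hQx := left_ne_zero_of_mul hx
  have hPx : ∀ i, g i ≠ 0 → eval x (P i).trailingCoeff ≠ 0 := fun i hi =>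
    Finset.prod_ne_zero_iff.1 (right_ne_zero_of_mul hx) i (by simpa using hi)
  have hslice : ∀ᶠ t in 𝓝 0, t ≠ 0 → quadrantIndicator (k + 1) n (Fin.cons t x) =
      ∑ i, sgn t ^ (P i).natTrailingDegree * sgn (eval x (P i).trailingCoeff) := by
    filter_upwards [eventually_sgn_eval_cons_eq q x fun _ => hQx,
      eventually_all.2 fun i => eventually_sgn_eval_cons_eq (g i) x (hPx i)] with t hqsgn hgt ht
    have hqt : eval (Fin.cons t x) q ≠ 0 := by
      rw [ne_eq, ← sgn_eq_zero_iff, hqsgn]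
      exact mul_ne_zero (pow_ne_zero _ (sgn_eq_zero_iff.not.2 ht)) (sgn_eq_zero_iff.not.2 hQx)
    rw [hg _ hqt]
    exact Finset.sum_congr rfl fun i _ => hgt i
  rw [quadrantIndicator_eq_two_mul_of_eventually_cons hslice]
  congr! 2 with i
  split_ifs with he <;> simp [he]

def IsGenericSumOfSigns {k : ℕ} (φ : (Fin k → ℝ) → ℤ) : Prop :=
  ∃ (s : ℕ) (g : Fin s → MvPolynomial (Fin k) ℝ) (q : MvPolynomial (Fin k) ℝ), q ≠ 0 ∧
    ∀ x, eval x q ≠ 0 → φ x = ∑ i, sgn (eval x (g i))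

theorem IsSumOfSigns.isGenericSumOfSigns {k : ℕ} {φ : (Fin k → ℝ) → ℤ} (h : IsSumOfSigns φ) :
    IsGenericSumOfSigns φ :=
  let ⟨s, g, hg⟩ := h
  ⟨s, g, 1, one_ne_zero, fun x _ => hg x⟩

theorem IsGenericSumOfSigns.exists_eq_two_mul_of_quadrantIndicator_succ {k : ℕ} {n : ℤ}
    (h : IsGenericSumOfSigns (quadrantIndicator (k + 1) n)) :
    ∃ n', n = 2 * n' ∧ IsGenericSumOfSigns (quadrantIndicator k n') := by
  obtain ⟨s, g, q, hq, hg⟩ := h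
  obtain ⟨h, q', hq', hh⟩ := exists_quadrantIndicator_eq_two_mul_of_succ hq hg
  obtain ⟨x, hxpos, hx⟩ := exists_pos_eval_ne_zero hq'
  have hn := hh x hx
  rw [quadrantIndicator, if_pos hxpos] at hn
  refine ⟨_, hn, s, h, q', hq', fun y hy => mul_left_cancel₀ two_ne_zero ?_⟩
  rw [← hh y hy, hn, quadrantIndicator_mul, Pi.smul_apply, smul_eq_mul]

theorem IsGenericSumOfSigns.two_pow_dvd_of_quadrantIndicator :
    ∀ {k : ℕ} {n : ℤ}, IsGenericSumOfSigns (quadrantIndicator k n) → 2 ^ k ∣ n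
  | 0, n, _ => by simp
  | k + 1, _, h => by
    obtain ⟨n', rfl, h'⟩ := h.exists_eq_two_mul_of_quadrantIndicator_succ
    rw [pow_succ']
    exact mul_dvd_mul_left 2 h'.two_pow_dvd_of_quadrantIndicator

def sumsOfSigns (k : ℕ) : AddSubgroup ((Fin k → ℝ) → ℤ) where
  carrier := {φ | IsSumOfSigns φ}
  zero_mem' := ⟨0, Fin.elim0, by simp⟩
  add_mem' := by
    rintro _ _ ⟨s, g, hg⟩ ⟨s', g', hg'⟩
    exact ⟨s + s', Fin.append g g', fun x => by simp [Fin.sum_univ_add, hg, hg']⟩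
  neg_mem' := by
    rintro _ ⟨s, g, hg⟩
    exact ⟨s, -g, fun x => by simp [hg, sgn_neg]⟩

theorem isSumOfSigns_of_eq_sum {k : ℕ} {ι : Type*} [Fintype ι] {φ : (Fin k → ℝ) → ℤ}
    (g : ι → MvPolynomial (Fin k) ℝ) (hφ : ∀ x, φ x = ∑ i, sgn (eval x (g i))) :
    IsSumOfSigns φ := by
  let e := Fintype.equivFin ι
  exact ⟨Fintype.card ι, g ∘ e.symm, fun x => by rw [hφ, ← e.symm.sum_comp]; rfl⟩

theorem isSumOfSigns_quadrantIndicator_two_pow (k : ℕ) :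
    IsSumOfSigns (quadrantIndicator k (2 ^ k)) := by
  classical
  refine isSumOfSigns_of_eq_sum (fun e : Fin k → Bool => ∏ i, X i ^ ((e i).toNat + 1))
    fun x => ?_
  calc quadrantIndicator k (2 ^ k) x = ∏ i, if 0 < x i then 2 else 0 := by
        simp [Finset.prod_ite_zero, quadrantIndicator]
    _ = ∏ i, ∑ b : Bool, sgn (x i ^ (b.toNat + 1)) := by simp [sgn_pow_two_add_sgn]
    _ = ∑ e : Fin k → Bool, ∏ i, sgn (x i ^ ((e i).toNat + 1)) := Fintype.prod_sum _
    _ = ∑ e : Fin k → Bool, sgn (eval x (∏ i, X i ^ ((e i).toNat + 1))) := by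
        simp [sgn_prod]

theorem sumOfSigns_open_quadrant_iff (k : ℕ) (n : ℤ) :
    IsSumOfSigns (fun x : Fin k → ℝ => if ∀ i, 0 < x i then n else 0) ↔
      (2 : ℤ) ^ k ∣ n := by
  change IsSumOfSigns (quadrantIndicator k n) ↔ _
  refine ⟨fun h => h.isGenericSumOfSigns.two_pow_dvd_of_quadrantIndicator, ?_⟩
  rintro ⟨c, rfl⟩
  rw [mul_comm, quadrantIndicator_mul]
  exact (sumsOfSigns k).zsmul_mem (isSumOfSigns_quadrantIndicator_two_pow k) c
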